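/- arXiv:2503.22443 — 3 statements merged into one kernel-verified Lean document; each statement's English description precedes it below -/
import Mathlib

section
/- Let F, G : ℂ → ℂ be entire functions (differentiable on all of ℂ) that map ℝ into ℝ. If there exist real numbers a < b such that |F(x)| = |G(x)| for all x ∈ (a, b), then F = G on ℂ or F = −G on ℂ. -/
/-!
On `(a, b)` the real values satisfy `F x ^ 2 = G x ^ 2`, so the entire function
`(F - G) * (F + G)` vanishes on a set with an accumulation point and hence identically.
Entire functions form an integral domain, so `F - G = 0` or `F + G = 0`.
-/

open Filter Topology

lemma Complex.sq_eq_sq_of_norm_eq_of_im_eq_zero {z w : ℂ} (hz : z.im = 0) (hw : w.im = 0)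
    (h : ‖z‖ = ‖w‖) : z ^ 2 = w ^ 2 := by
  rw [← Complex.re_add_im z, ← Complex.re_add_im w, hz, hw] at h ⊢
  simp only [Complex.ofReal_zero, zero_mul, add_zero, Complex.norm_real, Real.norm_eq_abs] at h ⊢
  exact_mod_cast (sq_eq_sq_iff_abs_eq_abs _ _).mpr h

lemma Differentiable.eq_zero_of_forall_mem_Ioo {f : ℂ → ℂ} (hf : Differentiable ℂ f) {a b : ℝ}
    (hab : a < b) (h : ∀ x ∈ Set.Ioo a b, f x = 0) : f = 0 := by
  obtain ⟨c, hc⟩ := Set.nonempty_Ioo.mpr hab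
  have h_real : ∃ᶠ x : ℝ in 𝓝[≠] c, f x = 0 :=
    (eventually_nhdsWithin_of_eventually_nhds
      (Filter.eventually_of_mem (isOpen_Ioo.mem_nhds hc) h)).frequently
  have h_ofReal : Tendsto ((↑) : ℝ → ℂ) (𝓝[≠] c) (𝓝[≠] (c : ℂ)) :=
    Complex.continuous_ofReal.continuousWithinAt.tendsto_nhdsWithin fun _ hx ↦ by simpa using hx
  funext z
  exact (hf.differentiableOn.analyticOnNhd isOpen_univ)
    |>.eqOn_zero_of_preconnected_of_frequently_eq_zero isPreconnected_univ (Set.mem_univ _)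
      (h_ofReal.frequently h_real) (Set.mem_univ z)

lemma Differentiable.eq_zero_or_eq_zero_of_mul_eq_zero {f g : ℂ → ℂ} (hf : Differentiable ℂ f)
    (hg : Differentiable ℂ g) (hfg : f * g = 0) : f = 0 ∨ g = 0 := by
  have analytic {h : ℂ → ℂ} (hh : Differentiable ℂ h) : AnalyticOnNhd ℂ h Set.univ :=
    hh.differentiableOn.analyticOnNhd isOpen_univ
  simpa [funext_iff] using (analytic hf).eq_zero_or_eq_zero_of_mul_eq_zero (analytic hg)
    (fun z _ ↦ congrFun hfg z) isPreconnected_univ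

/-- **Entire sign retrieval.** If `F, G : ℂ → ℂ` are entire functions that are real-valued
on the real axis and `|F| = |G|` on some nonempty open real interval `(a, b)`,
then `F = G` or `F = -G` on all of `ℂ`. -/
theorem entire_sign_retrieval (F G : ℂ → ℂ)
    (hF : Differentiable ℂ F) (hG : Differentiable ℂ G)
    (hFreal : ∀ x : ℝ, (F x).im = 0) (hGreal : ∀ x : ℝ, (G x).im = 0)
    (a b : ℝ) (hab : a < b)
    (habs : ∀ x : ℝ, x ∈ Set.Ioo a b → ‖F x‖ = ‖G x‖) :
    F = G ∨ F = -G := by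
  have h_prod : (F - G) * (F + G) = 0 := by
    refine ((hF.sub hG).mul (hF.add hG)).eq_zero_of_forall_mem_Ioo hab fun x hx ↦ ?_
    have h_sq := Complex.sq_eq_sq_of_norm_eq_of_im_eq_zero (hFreal x) (hGreal x) (habs x hx)
    simp only [Pi.mul_apply, Pi.sub_apply, Pi.add_apply]
    linear_combination h_sq
  rcases (hF.sub hG).eq_zero_or_eq_zero_of_mul_eq_zero (hF.add hG) h_prod with h | h
  · exact .inl (sub_eq_zero.mp h)
  · exact .inr (eq_neg_of_add_eq_zero_left h)
end

section
/- For every j ∈ {0,…,N} and every real ζ, the determinant a_j^+(ζ) b_j^−(ζ) − a_j^−(ζ) b_j^+(ζ) of the matrix with columns A_j^+(ζ) and A_j^−(ζ) is nonzero. -/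
/-!
Since `A_j^± = ½ L_j A_{j-1}^±`, the Wronskian `W_j = det [A_j^+, A_j^-]` satisfies
`W_j = det (½ L_j) · W_{j-1} = (q_j / q_{j-1}) · W_{j-1}`, so if some `W_j` vanished then so
would `W_N = b_N^-`. For real `ζ` the matrix `½ L_j` has the shape `[[α, β], [β̄, ᾱ]]`, hence
multiplies the indefinite form `|b|² - |a|²` by `|α|² - |β|² = det (½ L_j) > 0`. This form
equals `1` at `A_0^- = (0, 1)`, so it stays positive along `A_j^-`, and `b_N^- ≠ 0`.
-/

/-- The transfer matrix `L_j(ζ)` at the jump point `x_j`, for the piecewise constant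
bandwidth parameters `q_{j-1}, q_j`. -/
noncomputable def Lmat (xs q : ℕ → ℝ) (j : ℕ) (ζ : ℂ) : Matrix (Fin 2) (Fin 2) ℂ :=
  !![(1 + (q j : ℂ) / (q (j - 1) : ℂ)) *
        Complex.exp (Complex.I * (xs j : ℂ) * ((q j : ℂ) - (q (j - 1) : ℂ)) * ζ),
     (1 - (q j : ℂ) / (q (j - 1) : ℂ)) *
        Complex.exp (-(Complex.I * (xs j : ℂ) * ((q j : ℂ) + (q (j - 1) : ℂ)) * ζ));
     (1 - (q j : ℂ) / (q (j - 1) : ℂ)) *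
        Complex.exp (Complex.I * (xs j : ℂ) * ((q j : ℂ) + (q (j - 1) : ℂ)) * ζ),
     (1 + (q j : ℂ) / (q (j - 1) : ℂ)) *
        Complex.exp (-(Complex.I * (xs j : ℂ) * ((q j : ℂ) - (q (j - 1) : ℂ)) * ζ))]

/-- The vectors `A_j^-(ζ) = (a_j^-(ζ), b_j^-(ζ))`, defined by `A_0^- = (0, 1)` and
`A_j^- = (1/2) L_j(ζ) A_{j-1}^-`. -/
noncomputable def Aminus (xs q : ℕ → ℝ) : ℕ → ℝ → Fin 2 → ℂ
  | 0 => fun _ => ![0, 1]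
  | (j + 1) => fun ζ => (2 : ℂ)⁻¹ • (Lmat xs q (j + 1) ζ).mulVec (Aminus xs q j ζ)

/-- Auxiliary downward recursion for `A_j^+`: `AplusAux xs q N k ζ = A_{N-k}^+(ζ)`. -/
noncomputable def AplusAux (xs q : ℕ → ℝ) (N : ℕ) : ℕ → ℝ → Fin 2 → ℂ
  | 0 => fun _ => ![1, 0]
  | (k + 1) => fun ζ => (2 : ℂ) • ((Lmat xs q (N - k) ζ)⁻¹).mulVec (AplusAux xs q N k ζ)

/-- The vectors `A_j^+(ζ) = (a_j^+(ζ), b_j^+(ζ))`, defined by `A_N^+ = (1, 0)` and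
`A_{j-1}^+ = 2 L_j(ζ)⁻¹ A_j^+`. -/
noncomputable def Aplus (xs q : ℕ → ℝ) (N j : ℕ) (ζ : ℝ) : Fin 2 → ℂ :=
  AplusAux xs q N (N - j) ζ

open Complex ComplexConjugate Matrix

def wronskian {R : Type*} [CommRing R] (u v : Fin 2 → R) : R := u 0 * v 1 - v 0 * u 1

theorem wronskian_mulVec {R : Type*} [CommRing R] (M : Matrix (Fin 2) (Fin 2) R)
    (u v : Fin 2 → R) :
    wronskian (M *ᵥ u) (M *ᵥ v) = M.det * wronskian u v := by
  simp only [wronskian, mulVec, dotProduct, Fin.sum_univ_two, det_fin_two]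
  ring

def indefNormSq (v : Fin 2 → ℂ) : ℝ := normSq (v 1) - normSq (v 0)

section ConjSymm

variable {M : Matrix (Fin 2) (Fin 2) ℂ}

theorem det_eq_normSq_sub_normSq (h₁₁ : M 1 1 = conj (M 0 0)) (h₁₀ : M 1 0 = conj (M 0 1)) :
    M.det = (normSq (M 0 0) - normSq (M 0 1) : ℝ) := by
  rw [det_fin_two, h₁₁, h₁₀, mul_conj, mul_conj]
  push_cast; ring

theorem indefNormSq_mulVec (h₁₁ : M 1 1 = conj (M 0 0)) (h₁₀ : M 1 0 = conj (M 0 1))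
    (v : Fin 2 → ℂ) :
    indefNormSq (M *ᵥ v) = (normSq (M 0 0) - normSq (M 0 1)) * indefNormSq v := by
  simp only [indefNormSq, mulVec, dotProduct, Fin.sum_univ_two, h₁₁, h₁₀, normSq_apply,
    add_re, add_im, mul_re, mul_im, conj_re, conj_im]
  ring

end ConjSymm

section Transfer

variable (xs q : ℕ → ℝ)

theorem Lmat_det (j : ℕ) (ζ : ℂ) : (Lmat xs q j ζ).det = 4 * (q j / q (j - 1)) := by
  set r : ℂ := q j / q (j - 1)
  set θ : ℂ := I * xs j * (q j - q (j - 1)) * ζ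
  set φ : ℂ := I * xs j * (q j + q (j - 1)) * ζ
  have hθ : exp θ * exp (-θ) = 1 := by rw [← exp_add, add_neg_cancel, exp_zero]
  have hφ : exp (-φ) * exp φ = 1 := by rw [← exp_add, neg_add_cancel, exp_zero]
  simp only [Lmat, det_fin_two_of]
  linear_combination (1 + r) ^ 2 * hθ - (1 - r) ^ 2 * hφ

variable {xs q} (j : ℕ) (ζ : ℝ)

theorem Lmat_one_one : Lmat xs q j ζ 1 1 = conj (Lmat xs q j ζ 0 0) := by
  simp [Lmat, ← exp_conj, map_sub]

theorem Lmat_one_zero : Lmat xs q j ζ 1 0 = conj (Lmat xs q j ζ 0 1) := by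
  simp [Lmat, ← exp_conj, map_add]

end Transfer

section Solutions

variable {xs q : ℕ → ℝ} {N : ℕ} (ζ : ℝ)

theorem halfLmat_det (j : ℕ) : ((2 : ℂ)⁻¹ • Lmat xs q j ζ).det = q j / q (j - 1) := by
  rw [det_smul, Lmat_det, Fintype.card_fin]
  ring

theorem Aminus_succ (j : ℕ) :
    Aminus xs q (j + 1) ζ = ((2 : ℂ)⁻¹ • Lmat xs q (j + 1) ζ) *ᵥ Aminus xs q j ζ := by
  rw [smul_mulVec, Aminus]

theorem Aplus_self : Aplus xs q N N ζ = ![1, 0] := by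
  rw [Aplus, Nat.sub_self, AplusAux]

theorem Aplus_succ {j : ℕ} (hj : j < N) (hL : IsUnit (Lmat xs q (j + 1) ζ).det) :
    Aplus xs q N (j + 1) ζ = ((2 : ℂ)⁻¹ • Lmat xs q (j + 1) ζ) *ᵥ Aplus xs q N j ζ := by
  obtain ⟨k, hk⟩ := Nat.exists_eq_add_of_lt hj
  have hAplus :
      Aplus xs q N j ζ = (2 : ℂ) • (Lmat xs q (j + 1) ζ)⁻¹ *ᵥ Aplus xs q N (j + 1) ζ := by
    simp only [Aplus, hk, show j + k + 1 - j = k + 1 by omega,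
      show j + k + 1 - (j + 1) = k by omega, AplusAux, show j + k + 1 - k = j + 1 by omega]
  rw [hAplus, mulVec_smul, smul_mulVec, mulVec_mulVec, mul_nonsing_inv _ hL, one_mulVec, smul_smul,
    mul_inv_cancel₀ two_ne_zero, one_smul]

theorem indefNormSq_Aminus_succ (j : ℕ) :
    indefNormSq (Aminus xs q (j + 1) ζ) = q (j + 1) / q j * indefNormSq (Aminus xs q j ζ) := by
  set M := (2 : ℂ)⁻¹ • Lmat xs q (j + 1) ζ with hM
  have h₁₁ : M 1 1 = conj (M 0 0) := by simp [hM, Lmat_one_one, map_ofNat]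
  have h₁₀ : M 1 0 = conj (M 0 1) := by simp [hM, Lmat_one_zero, map_ofNat]
  have hfactor : normSq (M 0 0) - normSq (M 0 1) = q (j + 1) / q j := by
    have hdet := (det_eq_normSq_sub_normSq h₁₁ h₁₀).symm.trans (halfLmat_det ζ (j + 1))
    rw [Nat.add_sub_cancel] at hdet
    exact_mod_cast hdet
  rw [Aminus_succ, indefNormSq_mulVec h₁₁ h₁₀, hfactor]

theorem indefNormSq_Aminus_pos {j : ℕ} (hq : ∀ i ≤ j, 0 < q i) :
    0 < indefNormSq (Aminus xs q j ζ) := by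
  induction j with
  | zero => simp [indefNormSq, Aminus]
  | succ j ih =>
    rw [indefNormSq_Aminus_succ]
    exact mul_pos (div_pos (hq _ le_rfl) (hq _ j.le_succ))
      (ih fun i hi ↦ hq i (hi.trans j.le_succ))

theorem Aminus_one_ne_zero {j : ℕ} (hq : ∀ i ≤ j, 0 < q i) : Aminus xs q j ζ 1 ≠ 0 := by
  intro h
  have hpos := indefNormSq_Aminus_pos (xs := xs) ζ hq
  rw [indefNormSq, h, map_zero] at hpos
  linarith [normSq_nonneg (Aminus xs q j ζ 0)]

theorem wronskian_Aplus_Aminus_succ {j : ℕ} (hj : j < N) (hq : q j ≠ 0)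
    (hq' : q (j + 1) ≠ 0) :
    wronskian (Aplus xs q N (j + 1) ζ) (Aminus xs q (j + 1) ζ)
      = q (j + 1) / q j * wronskian (Aplus xs q N j ζ) (Aminus xs q j ζ) := by
  have hL : IsUnit (Lmat xs q (j + 1) ζ).det := by
    rw [isUnit_iff_ne_zero, Lmat_det, Nat.add_sub_cancel]
    exact mul_ne_zero (by norm_num) (div_ne_zero (ofReal_ne_zero.mpr hq') (ofReal_ne_zero.mpr hq))
  rw [Aplus_succ ζ hj hL, Aminus_succ, wronskian_mulVec, halfLmat_det, Nat.add_sub_cancel]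

end Solutions

theorem Avec_det_ne_zero_general (N : ℕ) (xs q : ℕ → ℝ)
    (hq : ∀ j : ℕ, j ≤ N → 0 < q j)
    (j : ℕ) (hjN : j ≤ N) (ζ : ℝ) :
    Aplus xs q N j ζ 0 * Aminus xs q j ζ 1 - Aminus xs q j ζ 0 * Aplus xs q N j ζ 1 ≠ 0 := by
  change wronskian (Aplus xs q N j ζ) (Aminus xs q j ζ) ≠ 0
  induction hjN using Nat.decreasingInduction with
  | self => simpa [wronskian, Aplus_self] using Aminus_one_ne_zero ζ hq
  | of_succ k hk ih =>
    rw [wronskian_Aplus_Aminus_succ ζ hk (hq k hk.le).ne' (hq (k + 1) hk).ne'] at ih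
    exact right_ne_zero_of_mul ih

/-- For every `j ∈ {0, …, N}` and real `ζ`, the determinant
`a_j^+(ζ) b_j^-(ζ) - a_j^-(ζ) b_j^+(ζ)` of the matrix with columns `A_j^+(ζ)` and
`A_j^-(ζ)` is nonzero. -/
theorem Avec_det_ne_zero (N : ℕ) (hN : 1 ≤ N) (xs q : ℕ → ℝ)
    (hxs : ∀ j : ℕ, 1 ≤ j → j < N → xs j < xs (j + 1))
    (hq : ∀ j : ℕ, j ≤ N → 0 < q j)
    (j : ℕ) (hjN : j ≤ N) (ζ : ℝ) :
    Aplus xs q N j ζ 0 * Aminus xs q j ζ 1 - Aminus xs q j ζ 0 * Aplus xs q N j ζ 1 ≠ 0 :=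
  Avec_det_ne_zero_general N xs q hq j hjN ζ
end

section
/- Let c > 0 and let φ ∈ L²(ℝ;ℂ). If Π_c φ(x) = 0 for every x < 0, then Π_c φ(x) = 0 for every x ∈ ℝ. -/
/-- `sinc t = sin t / t` for `t ≠ 0`, `sinc 0 = 1`. -/
noncomputable def sinc (t : ℝ) : ℝ := if t = 0 then 1 else Real.sin t / t

/-- The orthogonal projection of `L²(ℝ)` onto the Paley–Wiener space `PW_c(ℝ)`,
evaluated pointwise: `Π_c φ(x) = (c/π) ∫ sinc(c(x - y)) φ(y) dy`. -/
noncomputable def PiProj (c : ℝ) (φ : ℝ → ℂ) (x : ℝ) : ℂ :=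
  ((c / Real.pi : ℝ) : ℂ) * ∫ y : ℝ, ((sinc (c * (x - y)) : ℝ) : ℂ) * φ y

/-!
`Π_c φ` is the restriction to `ℝ` of `F z = (c/π) ∫ sinc (c (z - y)) φ y dy`, where `sinc` is
extended to the entire function `w ↦ sin w / w`. On every horizontal strip this kernel and its
derivative are `O(1 / (1 + |Re w|))`, so for `z` in a bounded set the integrand is dominated by
`C (1 + |y|)⁻¹ ‖φ y‖`, which is integrable by Cauchy–Schwarz because `φ ∈ L²`. Differentiating
under the integral sign shows that `F` is entire, and an entire function vanishing on the
negative half-line vanishes identically.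
-/

open MeasureTheory Complex Metric Filter Set
open scoped Topology

theorem Complex.norm_sin_le_exp_abs_im (w : ℂ) : ‖sin w‖ ≤ Real.exp |w.im| := by
  have hexp : ∀ s : ℂ, s = w * I ∨ s = -w * I → ‖exp s‖ ≤ Real.exp |w.im| := by
    rintro s (rfl | rfl) <;> rw [norm_exp] <;> gcongr <;> simp [neg_le_abs, le_abs_self]
  calc ‖sin w‖ = ‖exp (-w * I) - exp (w * I)‖ / 2 := by
        rw [sin, norm_div, norm_mul, norm_I, mul_one, RCLike.norm_ofNat]
    _ ≤ (‖exp (-w * I)‖ + ‖exp (w * I)‖) / 2 := by gcongr; exact norm_sub_le _ _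
    _ ≤ Real.exp |w.im| := by linarith [hexp _ (.inl rfl), hexp _ (.inr rfl)]

def DecaysOnStrips (k : ℂ → ℂ) : Prop :=
  ∀ M : ℝ, ∃ C : ℝ, ∀ w : ℂ, |w.im| ≤ M → ‖k w‖ ≤ C / (1 + |w.re|)

namespace DecaysOnStrips

variable {k : ℂ → ℂ}

theorem comp_ofReal_mul (hk : DecaysOnStrips k) {c : ℝ} (hc : 0 < c) :
    DecaysOnStrips fun w => k (c * w) := by
  intro M
  obtain ⟨C, hC⟩ := hk (c * M)
  refine ⟨C * (1 + c⁻¹), fun w hw => ?_⟩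
  have hcw := hC (c * w) <| by
    simpa [abs_mul, abs_of_pos hc] using mul_le_mul_of_nonneg_left hw hc.le
  simp only [re_ofReal_mul, abs_mul, abs_of_pos hc] at hcw
  rw [le_div_iff₀ (by positivity)] at hcw
  have hscale : 1 + |w.re| ≤ (1 + c⁻¹) * (1 + c * |w.re|) := by
    have : c⁻¹ * (c * |w.re|) = |w.re| := by field_simp
    nlinarith [inv_pos.mpr hc, abs_nonneg w.re, mul_nonneg hc.le (abs_nonneg w.re)]
  rw [le_div_iff₀ (by positivity)]
  calc ‖k (c * w)‖ * (1 + |w.re|) ≤ ‖k (c * w)‖ * ((1 + c⁻¹) * (1 + c * |w.re|)) := by gcongr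
    _ ≤ C * (1 + c⁻¹) := by nlinarith [inv_pos.mpr hc]

theorem deriv (hdiff : Differentiable ℂ k) (hk : DecaysOnStrips k) :
    DecaysOnStrips (deriv k) := by
  intro M
  obtain ⟨C, hC⟩ := hk (M + 1)
  refine ⟨2 * C, fun w hw => ?_⟩
  have hsphere : ∀ ξ ∈ sphere w 1, ‖k ξ‖ ≤ 2 * C / (1 + |w.re|) := by
    intro ξ hξ
    have hξw : ‖ξ - w‖ = 1 := by rwa [mem_sphere_iff_norm] at hξ
    have him : |ξ.im| ≤ M + 1 := by
      have := (abs_im_le_norm (ξ - w)).trans hξw.le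
      rw [sub_im] at this
      linarith [abs_sub_abs_le_abs_sub ξ.im w.im]
    have hre : |w.re| ≤ |ξ.re| + 1 := by
      have := (abs_re_le_norm (ξ - w)).trans hξw.le
      rw [sub_re] at this
      linarith [abs_sub_abs_le_abs_sub w.re ξ.re, abs_sub_comm w.re ξ.re]
    have hkξ := hC ξ him
    rw [le_div_iff₀ (by positivity)] at hkξ ⊢
    calc ‖k ξ‖ * (1 + |w.re|) ≤ ‖k ξ‖ * (2 * (1 + |ξ.re|)) := by
          gcongr; linarith [abs_nonneg ξ.re]
      _ ≤ 2 * C := by linarith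
  simpa using norm_deriv_le_of_forall_mem_sphere_norm_le one_pos hdiff.diffContOnCl hsphere

theorem exists_bound_sub (hk : DecaysOnStrips k) (R : ℝ) :
    ∃ C : ℝ, ∀ z : ℂ, ‖z‖ ≤ R → ∀ y : ℝ, ‖k (z - y)‖ ≤ C / (1 + |y|) := by
  obtain ⟨C, hC⟩ := hk R
  refine ⟨(1 + R) * C, fun z hz y => ?_⟩
  have hR : 0 ≤ R := (norm_nonneg z).trans hz
  have hkz := hC (z - y) (by simpa using (abs_im_le_norm z).trans hz)
  rw [sub_re, ofReal_re, le_div_iff₀ (by positivity)] at hkz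
  have hy : 1 + |y| ≤ (1 + R) * (1 + |z.re - y|) := by
    nlinarith [(abs_re_le_norm z).trans hz, abs_sub_abs_le_abs_sub y z.re, abs_sub_comm y z.re,
      mul_nonneg hR (abs_nonneg (z.re - y))]
  rw [le_div_iff₀ (by positivity)]
  calc ‖k (z - y)‖ * (1 + |y|) ≤ ‖k (z - y)‖ * ((1 + R) * (1 + |z.re - y|)) := by gcongr
    _ = (1 + R) * (‖k (z - y)‖ * (1 + |z.re - y|)) := by ring
    _ ≤ (1 + R) * C := by gcongr

end DecaysOnStrips

theorem memLp_two_inv_one_add_abs : MemLp (fun y : ℝ => (1 + |y|)⁻¹) 2 volume := by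
  have hcont : Continuous fun y : ℝ => (1 + |y|)⁻¹ :=
    (continuous_const.add continuous_abs).inv₀ fun y =>
      (add_pos_of_pos_of_nonneg one_pos (abs_nonneg y)).ne'
  rw [memLp_two_iff_integrable_sq hcont.aestronglyMeasurable]
  refine integrable_inv_one_add_sq.mono' (hcont.pow 2).aestronglyMeasurable
    (Eventually.of_forall fun y => ?_)
  rw [Real.norm_of_nonneg (by positivity), inv_pow]
  gcongr
  nlinarith [sq_abs y, abs_nonneg y]

theorem MeasureTheory.MemLp.integrable_inv_one_add_abs_mul_norm {φ : ℝ → ℂ}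
    (hφ : MemLp φ 2 volume) : Integrable (fun y => (1 + |y|)⁻¹ * ‖φ y‖) volume :=
  memLp_two_inv_one_add_abs.integrable_mul hφ.norm

theorem differentiable_integral_mul_of_decaysOnStrips {k : ℂ → ℂ} (hdiff : Differentiable ℂ k)
    (hk : DecaysOnStrips k) {φ : ℝ → ℂ} (hφ : MemLp φ 2 volume) :
    Differentiable ℂ fun z => ∫ y : ℝ, k (z - y) * φ y := by
  intro z₀
  have hball : ∀ z ∈ ball z₀ 1, ‖z‖ ≤ ‖z₀‖ + 1 := fun z hz => by
    linarith [norm_le_norm_add_norm_sub' z z₀, (mem_ball_iff_norm.mp hz).le]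
  obtain ⟨C₀, hC₀⟩ := hk.exists_bound_sub (‖z₀‖ + 1)
  obtain ⟨C₁, hC₁⟩ := (hk.deriv hdiff).exists_bound_sub (‖z₀‖ + 1)
  have hg := hφ.integrable_inv_one_add_abs_mul_norm
  have hmeas : ∀ {f : ℂ → ℂ}, Continuous f → ∀ z : ℂ,
      AEStronglyMeasurable (fun y : ℝ => f (z - y) * φ y) volume := fun hf z =>
    (hf.comp (continuous_const.sub continuous_ofReal)).aestronglyMeasurable.mul hφ.1
  refine (hasDerivAt_integral_of_dominated_loc_of_deriv_le (ball_mem_nhds z₀ one_pos)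
    (Eventually.of_forall (hmeas hdiff.continuous)) ?_ (hmeas hdiff.deriv.continuous z₀)
    (F' := fun z y => deriv k (z - y) * φ y) (bound := fun y => C₁ * ((1 + |y|)⁻¹ * ‖φ y‖))
    ?_ (hg.const_mul C₁) ?_).2.differentiableAt
  · refine (hg.const_mul C₀).mono' (hmeas hdiff.continuous z₀) (Eventually.of_forall fun y => ?_)
    rw [norm_mul, ← mul_assoc, ← div_eq_mul_inv]
    gcongr
    exact hC₀ z₀ (hball z₀ (mem_ball_self one_pos)) y
  · refine Eventually.of_forall fun y z hz => ?_
    rw [norm_mul, ← mul_assoc, ← div_eq_mul_inv]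
    gcongr
    exact hC₁ z (hball z hz) y
  · exact Eventually.of_forall fun y z _ =>
      ((hdiff _).hasDerivAt.comp_sub_const z y).mul_const (φ y)

-- `dslope sin 0` is `w ↦ sin w / w` with the value `1` at `0`: the entire extension of `sinc`.
theorem differentiable_dslope_sin_zero : Differentiable ℂ (dslope sin 0) :=
  differentiableOn_univ.mp <|
    (differentiableOn_dslope univ_mem).mpr differentiable_sin.differentiableOn

theorem dslope_sin_zero_ofReal (r : ℝ) : dslope sin 0 (r : ℂ) = sinc r := by
  by_cases hr : r = 0
  · simp [hr, dslope_same, sinc]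
  · rw [dslope_of_ne _ (by exact_mod_cast hr), slope_def_field, sinc, if_neg hr]
    push_cast
    simp

theorem decaysOnStrips_dslope_sin_zero : DecaysOnStrips (dslope sin 0) := by
  intro M
  obtain ⟨B, hB⟩ := (isCompact_closedBall (0 : ℂ) 1).exists_bound_of_continuousOn
    differentiable_dslope_sin_zero.continuous.continuousOn
  refine ⟨2 * (B + Real.exp M), fun w hw => ?_⟩
  have hB0 : 0 ≤ B := (norm_nonneg _).trans (hB 0 (mem_closedBall_self zero_le_one))
  have hre : |w.re| ≤ ‖w‖ := abs_re_le_norm w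
  rw [le_div_iff₀ (by positivity)]
  rcases le_or_gt ‖w‖ 1 with hw1 | hw1
  · have := hB w (mem_closedBall_zero_iff.mpr hw1)
    nlinarith [norm_nonneg (dslope sin 0 w), Real.exp_pos M]
  · have hw0 : w ≠ 0 := norm_pos_iff.mp (one_pos.trans hw1)
    have hsin : ‖sin w‖ ≤ Real.exp M :=
      (norm_sin_le_exp_abs_im w).trans (Real.exp_le_exp.mpr hw)
    have hk : ‖dslope sin 0 w‖ * ‖w‖ = ‖sin w‖ := by
      rw [dslope_of_ne _ hw0, slope_def_field, sin_zero, sub_zero, sub_zero, norm_div,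
        div_mul_cancel₀ _ (norm_ne_zero_iff.mpr hw0)]
    nlinarith [norm_nonneg (dslope sin 0 w)]

theorem Differentiable.eq_zero_of_forall_ofReal_neg {E : Type*} [NormedAddCommGroup E]
    [NormedSpace ℂ E] [CompleteSpace E] {f : ℂ → E} (hf : Differentiable ℂ f)
    (h : ∀ x : ℝ, x < 0 → f x = 0) : f = 0 := by
  have hreal : ∀ᶠ x : ℝ in 𝓝[≠] (-1), f x = 0 :=
    eventually_nhdsWithin_of_eventually_nhds <|
      (eventually_lt_nhds (by norm_num : (-1 : ℝ) < 0)).mono h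
  have hofReal : Tendsto ofReal (𝓝[≠] (-1 : ℝ)) (𝓝[≠] ((-1 : ℝ) : ℂ)) :=
    continuous_ofReal.continuousWithinAt.tendsto_nhdsWithin fun _ hx => ofReal_injective.ne hx
  have hanalytic : AnalyticOnNhd ℂ f univ := fun z _ => hf.analyticAt z
  funext z
  exact hanalytic.eqOn_zero_of_preconnected_of_frequently_eq_zero isPreconnected_univ
    (mem_univ _) (hofReal.frequently hreal.frequently) (mem_univ z)

/-- `Π_c φ` extends to an entire function: if it vanishes on the negative half-line,
it vanishes identically. -/
theorem piProj_eq_zero_of_neg (c : ℝ) (hc : 0 < c) (φ : ℝ → ℂ)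
    (hφ2 : MeasureTheory.MemLp φ 2 MeasureTheory.volume)
    (h : ∀ x : ℝ, x < 0 → PiProj c φ x = 0) :
    ∀ x : ℝ, PiProj c φ x = 0 := by
  set F : ℂ → ℂ := fun z => ∫ y : ℝ, dslope sin 0 (c * (z - y)) * φ y
  have hF : Differentiable ℂ F :=
    differentiable_integral_mul_of_decaysOnStrips (k := fun w => dslope sin 0 (c * w))
      (differentiable_dslope_sin_zero.comp (differentiable_id.const_mul _))
      (decaysOnStrips_dslope_sin_zero.comp_ofReal_mul hc) hφ2
  have hPi : ∀ x : ℝ, PiProj c φ x = ((c / Real.pi : ℝ) : ℂ) * F x := fun x => by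
    simp only [PiProj, F, ← dslope_sin_zero_ofReal]
    push_cast
    rfl
  have hcπ : ((c / Real.pi : ℝ) : ℂ) ≠ 0 := by exact_mod_cast (div_pos hc Real.pi_pos).ne'
  have hF0 : F = 0 := hF.eq_zero_of_forall_ofReal_neg fun x hx =>
    (mul_eq_zero.mp (hPi x ▸ h x hx)).resolve_left hcπ
  intro x
  simp [hPi, hF0]
end
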